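/- arXiv:2003.13603 — 2 statements merged into one kernel-verified Lean document; each statement's English description precedes it below -/
import Mathlib

section
/- For every β ∈ ℝ: f_β(1) = K_n·(cos(β/2)(1 + tan(π/(2n))) + i·sin(β/2)(1 − tan(π/(2n)))) and f_β(e^{iπ/n}) = e^{iπ/n}·K_n·(cos(β/2)(1 − tan(π/(2n))) + i·sin(β/2)(1 + tan(π/(2n)))). Consequently |f_β(1)|² = K_n²(sec²(π/(2n)) + 2 tan(π/(2n)) cos β) and |f_β(e^{iπ/n})|² = K_n²(sec²(π/(2n)) − 2 tan(π/(2n)) cos β). -/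
open Real

noncomputable def A (m : ℕ) : ℝ := (Nat.centralBinom m : ℝ) / 4 ^ m

noncomputable def c (n m : ℕ) : ℝ := A m / (2 * m * n + 1)

noncomputable def d (n m : ℕ) : ℝ := A m * ((n : ℝ) - 1) / ((n : ℝ) * (2 * m + 1) - 1)

noncomputable def H (n : ℕ) (z : ℂ) : ℂ := ∑' m : ℕ, (c n m : ℂ) * z ^ m

noncomputable def G (n : ℕ) (z : ℂ) : ℂ := ∑' m : ℕ, (d n m : ℂ) * z ^ m

noncomputable def hh (n : ℕ) (z : ℂ) : ℂ := ∑' m : ℕ, (c n m : ℂ) * z ^ (2 * m * n + 1)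

noncomputable def gg (n : ℕ) (z : ℂ) : ℂ :=
  (1 / ((n : ℂ) - 1)) * ∑' m : ℕ, (d n m : ℂ) * z ^ (2 * m * n + n - 1)

noncomputable def f (n : ℕ) (β : ℝ) (z : ℂ) : ℂ :=
  Complex.exp (Complex.I * β / 2) * hh n z +
    Complex.exp (-(Complex.I * β / 2)) * (starRingEnd ℂ) (gg n z)

noncomputable def K (n : ℕ) : ℝ :=
  Real.sqrt π * Real.Gamma (1 + 1 / (2 * n)) / Real.Gamma (1 / 2 + 1 / (2 * n))

/-!
The coefficients `A m` are those of the binomial series of `(1 - x) ^ (-1/2)`, so integrating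
term by term turns `∑ A m / (m + s)` into the Beta integral `∫₀¹ u^(s-1) (1-u)^(-1/2) du`,
i.e. `Γ(s) √π / Γ(s + 1/2)`. With `x = 1/(2n)`, the choice `s = x` gives `∑ c n m = K n`, and
`s = 1/2 - x` together with the two reflection formulas gives `∑ d n m = (n - 1) K n tan (π x)`.
At `z = 1` the series are these sums. The point `ζ = e^{iπ/n}` satisfies `ζ^(2n) = 1`, so every
term of `hh n ζ` and `gg n ζ` carries the same power of `ζ`, and `ζ^n = -1` turns
`conj (ζ^(n-1))` into `-ζ`.
-/

open MeasureTheory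

lemma ascPochhammer_eval_one_half_mul_four_pow (m : ℕ) :
    (ascPochhammer ℝ m).eval (1 / 2) * 4 ^ m = Nat.centralBinom m * m.factorial := by
  induction m with
  | zero => simp
  | succ m ih =>
    have h := congrArg (Nat.cast : ℕ → ℝ) (Nat.succ_mul_centralBinom_succ m)
    push_cast at h
    rw [ascPochhammer_succ_eval, Nat.factorial_succ]
    push_cast
    linear_combination (2 * (m : ℝ) + 1) * 2 * ih - (m.factorial : ℝ) * h

lemma A_eq_multichoose (m : ℕ) : A m = Ring.multichoose (1 / 2 : ℝ) m := by
  have h := Ring.factorial_nsmul_multichoose_eq_ascPochhammer (1 / 2 : ℝ) m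
  rw [Polynomial.ascPochhammer_smeval_eq_eval, nsmul_eq_mul] at h
  have hf : (m.factorial : ℝ) ≠ 0 := by positivity
  rw [A, div_eq_iff (by positivity)]
  apply mul_left_cancel₀ hf
  linear_combination -ascPochhammer_eval_one_half_mul_four_pow m - 4 ^ m * h

lemma hasSum_A_mul_pow {x : ℝ} (hx : |x| < 1) :
    HasSum (fun m => A m * x ^ m) ((1 - x) ^ (-(1 / 2) : ℝ)) := by
  have h := (one_div_one_sub_rpow_hasFPowerSeriesOnBall_zero (1 / 2)).hasSum
    (y := x) (by simpa [enorm_eq_nnnorm, ← NNReal.coe_lt_coe] using hx)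
  simp only [FormalMultilinearSeries.ofScalars_apply_eq, zero_add, smul_eq_mul] at h
  rw [Real.rpow_neg (by linarith [le_abs_self x]), ← one_div]
  refine h.congr_fun fun m => ?_
  rw [A_eq_multichoose, Ring.multichoose_eq]

lemma ofReal_betaIntegrand {a b u : ℝ} (hu : u ∈ Set.Icc (0 : ℝ) 1) :
    ((u ^ (a - 1) * (1 - u) ^ (b - 1) : ℝ) : ℂ) =
      (u : ℂ) ^ ((a : ℂ) - 1) * (1 - (u : ℂ)) ^ ((b : ℂ) - 1) := by
  have h1u : 0 ≤ 1 - u := by linarith [hu.2]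
  push_cast [Complex.ofReal_mul, Complex.ofReal_cpow hu.1, Complex.ofReal_cpow h1u]
  rfl

lemma intervalIntegrable_rpow_mul_one_sub_rpow {a b : ℝ} (ha : 0 < a) (hb : 0 < b) :
    IntervalIntegrable (fun u : ℝ => u ^ (a - 1) * (1 - u) ^ (b - 1)) volume 0 1 := by
  have h := (Complex.betaIntegral_convergent (u := a) (v := b) (by simpa) (by simpa)).norm
  refine h.congr_uIoo fun u hu => ?_
  rw [Set.uIoo_of_le zero_le_one] at hu
  simp only [← ofReal_betaIntegrand (Set.Ioo_subset_Icc_self hu), Complex.norm_real,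
    Real.norm_eq_abs]
  exact abs_of_nonneg (by have := hu.1; have := hu.2; positivity)

lemma integral_rpow_mul_one_sub_rpow {a b : ℝ} (ha : 0 < a) (hb : 0 < b) :
    ∫ u in (0 : ℝ)..1, u ^ (a - 1) * (1 - u) ^ (b - 1) = Gamma a * Gamma b / Gamma (a + b) := by
  have h := Complex.betaIntegral_eq_Gamma_mul_div a b (by simpa) (by simpa)
  rw [Complex.betaIntegral, ← intervalIntegral.integral_congr fun u hu =>
    ofReal_betaIntegrand (a := a) (b := b) (by rwa [Set.uIcc_of_le zero_le_one] at hu),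
    intervalIntegral.integral_ofReal, ← Complex.ofReal_add, Complex.Gamma_ofReal,
    Complex.Gamma_ofReal, Complex.Gamma_ofReal] at h
  exact_mod_cast h

lemma A_nonneg (m : ℕ) : 0 ≤ A m := by unfold A; positivity

lemma integral_A_mul_rpow (m : ℕ) {s : ℝ} (hs : 0 < s) :
    ∫ u in (0 : ℝ)..1, A m * u ^ ((m : ℝ) + s - 1) = A m / (m + s) := by
  have hms : 0 < (m : ℝ) + s := by positivity
  rw [intervalIntegral.integral_const_mul, integral_rpow (Or.inl (by linarith)),
    sub_add_cancel, one_rpow, zero_rpow hms.ne']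
  ring

lemma hasSum_A_mul_rpow {s u : ℝ} (hu : u ∈ Set.Ioo (0 : ℝ) 1) :
    HasSum (fun m : ℕ => A m * u ^ ((m : ℝ) + s - 1))
      (u ^ (s - 1) * (1 - u) ^ ((1 / 2 : ℝ) - 1)) := by
  have hu' : |u| < 1 := abs_lt.2 ⟨by linarith [hu.1], hu.2⟩
  have h := (hasSum_A_mul_pow hu').mul_left (u ^ (s - 1))
  rw [show (1 / 2 : ℝ) - 1 = -(1 / 2) by norm_num]
  refine h.congr_fun fun m => ?_
  rw [add_sub_assoc, rpow_add hu.1, rpow_natCast]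
  ring

theorem hasSum_A_div_add {s : ℝ} (hs : 0 < s) :
    HasSum (fun m : ℕ => A m / (m + s)) (Gamma s * √π / Gamma (s + 1 / 2)) := by
  have hbound : ∀ m : ℕ, ∀ u ∈ Set.uIoc (0 : ℝ) 1, 0 ≤ A m * u ^ ((m : ℝ) + s - 1) :=
    fun m u hu => mul_nonneg (A_nonneg m) (rpow_nonneg (le_of_lt (by simpa using hu.1)) _)
  -- the generating series diverges at `u = 1`
  have hne : ∀ᵐ u : ℝ, u ∉ ({1} : Set ℝ) := (Set.countable_singleton 1).ae_notMem _
  have hlim : ∀ᵐ u : ℝ, u ∈ Set.uIoc (0 : ℝ) 1 →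
      HasSum (fun m : ℕ => A m * u ^ ((m : ℝ) + s - 1))
        (u ^ (s - 1) * (1 - u) ^ ((1 / 2 : ℝ) - 1)) := by
    filter_upwards [hne] with u hu1 hu
    rw [Set.uIoc_of_le zero_le_one] at hu
    exact hasSum_A_mul_rpow ⟨hu.1, lt_of_le_of_ne hu.2 hu1⟩
  have h := intervalIntegral.hasSum_integral_of_dominated_convergence
    (fun m u => A m * u ^ ((m : ℝ) + s - 1)) (fun m => by fun_prop)
    (fun m => ae_of_all _ fun u hu => (Real.norm_of_nonneg (hbound m u hu)).le)
    (hlim.mono fun u hu hu' => (hu hu').summable)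
    ((intervalIntegrable_rpow_mul_one_sub_rpow hs (by norm_num : (0 : ℝ) < 1 / 2)).congr_uIoo
      fun u hu => (hasSum_A_mul_rpow (by rwa [Set.uIoo_of_le zero_le_one] at hu)).tsum_eq.symm)
    hlim
  rw [integral_rpow_mul_one_sub_rpow hs (by norm_num), Gamma_one_half_eq] at h
  simpa only [integral_A_mul_rpow _ hs, mul_comm (√π)] using h

lemma Gamma_one_half_sub_div_Gamma_one_sub {x : ℝ} (hx : 0 < x) :
    Gamma (1 / 2 - x) / Gamma (1 - x) = Gamma x / Gamma (x + 1 / 2) * tan (π * x) := by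
  have hΓx := Gamma_pos_of_pos hx
  have hΓ₁ := Gamma_pos_of_pos (by linarith : 0 < x + 1 / 2)
  have hreflect₁ := Gamma_mul_Gamma_one_sub x
  have hreflect₂ : Gamma (x + 1 / 2) * Gamma (1 / 2 - x) = π / cos (π * x) := by
    have h := Gamma_mul_Gamma_one_sub (x + 1 / 2)
    rwa [show 1 - (x + 1 / 2) = 1 / 2 - x by ring, mul_add, mul_one_div, sin_add_pi_div_two] at h
  rw [eq_div_of_mul_eq hΓ₁.ne' ((mul_comm _ _).trans hreflect₂),
    eq_div_of_mul_eq hΓx.ne' ((mul_comm _ _).trans hreflect₁), tan_eq_sin_div_cos]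
  field_simp

lemma K_eq_Gamma {n : ℕ} (hn : 0 < n) :
    K n = 1 / (2 * n) * (Gamma (1 / (2 * n)) * √π / Gamma (1 / (2 * n) + 1 / 2)) := by
  rw [K, add_comm (1 : ℝ), Gamma_add_one (by positivity), add_comm (1 / 2 : ℝ)]
  ring

theorem hasSum_c {n : ℕ} (hn : 0 < n) : HasSum (c n) (K n) := by
  rw [K_eq_Gamma hn]
  refine ((hasSum_A_div_add (by positivity : (0 : ℝ) < 1 / (2 * n))).mul_left _).congr_fun
    fun m => ?_
  rw [c]
  field_simp

theorem hasSum_d {n : ℕ} (hn : 2 ≤ n) :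
    HasSum (d n) ((n - 1) * (K n * tan (π / (2 * n)))) := by
  have hn' : (2 : ℝ) ≤ n := by exact_mod_cast hn
  set x : ℝ := 1 / (2 * n) with hx
  have hx₀ : 0 < x := by positivity
  have hx₁ : x < 1 / 2 := by
    rw [hx, div_lt_div_iff₀ (by positivity) (by norm_num)]; linarith
  have hsum : (n - 1) * (K n * tan (π / (2 * n))) =
      (n - 1) * x * (Gamma (1 / 2 - x) * √π / Gamma (1 / 2 - x + 1 / 2)) := by
    rw [sub_add_eq_add_sub, add_halves, mul_div_right_comm, Gamma_one_half_sub_div_Gamma_one_sub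
      hx₀, K_eq_Gamma (by omega), div_eq_mul_one_div π, ← hx]
    ring
  rw [hsum]
  refine ((hasSum_A_div_add (by linarith : 0 < 1 / 2 - x)).mul_left _).congr_fun fun m => ?_
  rw [d, hx]
  field_simp
  ring

lemma hh_one {n : ℕ} (hn : 0 < n) : hh n 1 = K n := by
  simp only [hh, one_pow, mul_one, ← Complex.ofReal_tsum, (hasSum_c hn).tsum_eq]

lemma gg_one {n : ℕ} (hn : 2 ≤ n) : gg n 1 = ((K n * tan (π / (2 * n)) : ℝ) : ℂ) := by
  have hn₁ : (n : ℂ) - 1 ≠ 0 := sub_ne_zero.2 (by exact_mod_cast (by omega : n ≠ 1))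
  simp only [gg, one_pow, mul_one, ← Complex.ofReal_tsum, (hasSum_d hn).tsum_eq]
  push_cast
  field_simp

lemma hh_of_pow_eq_one {n : ℕ} {z : ℂ} (hz : z ^ (2 * n) = 1) : hh n z = z * hh n 1 := by
  simp only [hh, one_pow, mul_one, ← tsum_mul_left]
  refine tsum_congr fun m => ?_
  rw [show 2 * m * n + 1 = 2 * n * m + 1 by ring, pow_succ, pow_mul, hz, one_pow]
  ring

lemma gg_of_pow_eq_one {n : ℕ} {z : ℂ} (hn : 0 < n) (hz : z ^ (2 * n) = 1) :
    gg n z = z ^ (n - 1) * gg n 1 := by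
  simp only [gg, one_pow, mul_one, ← tsum_mul_left]
  refine tsum_congr fun m => ?_
  rw [show 2 * m * n + n - 1 = 2 * n * m + (n - 1) by rw [Nat.mul_right_comm]; omega, pow_add,
    pow_mul, hz, one_pow]
  ring

lemma f_eq_cos_add_sin_mul_I (n : ℕ) (β : ℝ) (z : ℂ) :
    f n β z = (cos (β / 2) + sin (β / 2) * Complex.I) * hh n z +
      (cos (β / 2) - sin (β / 2) * Complex.I) * (starRingEnd ℂ) (gg n z) := by
  have h₁ : Complex.I * β / 2 = ((β / 2 : ℝ) : ℂ) * Complex.I := by push_cast; ring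
  have h₂ : -(Complex.I * β / 2) = ((-(β / 2) : ℝ) : ℂ) * Complex.I := by push_cast; ring
  rw [f, h₂, h₁, Complex.exp_mul_I, Complex.exp_mul_I, ← Complex.ofReal_cos,
    ← Complex.ofReal_sin, ← Complex.ofReal_cos, ← Complex.ofReal_sin, cos_neg, sin_neg]
  push_cast
  ring

lemma exp_I_mul_pi_div_pow_self {n : ℕ} (hn : 0 < n) :
    Complex.exp (Complex.I * ((π / n : ℝ) : ℂ)) ^ n = -1 := by
  have hn' : (n : ℂ) ≠ 0 := Nat.cast_ne_zero.2 hn.ne'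
  rw [← Complex.exp_nat_mul, ← Complex.exp_pi_mul_I]
  congr 1
  push_cast
  field_simp

lemma conj_exp_I_mul_pi_div_pow_pred {n : ℕ} (hn : 0 < n) :
    (starRingEnd ℂ) (Complex.exp (Complex.I * ((π / n : ℝ) : ℂ)) ^ (n - 1)) =
      -Complex.exp (Complex.I * ((π / n : ℝ) : ℂ)) := by
  set ζ := Complex.exp (Complex.I * ((π / n : ℝ) : ℂ))
  have hζ : (starRingEnd ℂ) ζ * ζ = 1 := by
    rw [Complex.conj_mul', Complex.norm_exp_I_mul_ofReal]
    norm_num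
  have h : ζ ^ (n - 1) * ζ = -1 := by
    rw [← pow_succ, Nat.sub_add_cancel hn, exp_I_mul_pi_div_pow_self hn]
  have h' := congrArg (starRingEnd ℂ) h
  rw [map_mul, map_neg, map_one] at h'
  linear_combination -(starRingEnd ℂ) (ζ ^ (n - 1)) * hζ + ζ * h'

lemma norm_sq_cos_half_add_I_sin_half (t θ : ℝ) :
    ‖((cos (θ / 2) * (1 + t) : ℝ) : ℂ) + Complex.I * ((sin (θ / 2) * (1 - t) : ℝ) : ℂ)‖ ^ 2
      = 1 + t ^ 2 + 2 * t * cos θ := by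
  rw [Complex.sq_norm, mul_comm Complex.I, Complex.normSq_add_mul_I]
  have hθ : θ = 2 * (θ / 2) := by ring
  rw [hθ, cos_two_mul, ← hθ]
  linear_combination (1 + t ^ 2 - 2 * t) * sin_sq_add_cos_sq (θ / 2)

lemma f_one {n : ℕ} (hn : 2 ≤ n) (β : ℝ) :
    f n β 1 = K n * (((cos (β / 2) * (1 + tan (π / (2 * n))) : ℝ) : ℂ) +
      Complex.I * ((sin (β / 2) * (1 - tan (π / (2 * n))) : ℝ) : ℂ)) := by
  rw [f_eq_cos_add_sin_mul_I, hh_one (by omega), gg_one hn, Complex.conj_ofReal]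
  simp only [Complex.ofReal_mul, Complex.ofReal_add, Complex.ofReal_sub, Complex.ofReal_one]
  ring

lemma f_exp_I_mul_pi_div {n : ℕ} (hn : 2 ≤ n) (β : ℝ) :
    f n β (Complex.exp (Complex.I * ((π / n : ℝ) : ℂ))) =
      Complex.exp (Complex.I * ((π / n : ℝ) : ℂ)) * K n *
        (((cos (β / 2) * (1 - tan (π / (2 * n))) : ℝ) : ℂ) +
          Complex.I * ((sin (β / 2) * (1 + tan (π / (2 * n))) : ℝ) : ℂ)) := by
  have hn₀ : 0 < n := by omega
  have hζ : Complex.exp (Complex.I * ((π / n : ℝ) : ℂ)) ^ (2 * n) = 1 := by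
    rw [pow_mul', exp_I_mul_pi_div_pow_self hn₀]
    norm_num
  rw [f_eq_cos_add_sin_mul_I, hh_of_pow_eq_one hζ, gg_of_pow_eq_one hn₀ hζ, map_mul,
    conj_exp_I_mul_pi_div_pow_pred hn₀, hh_one hn₀, gg_one hn, Complex.conj_ofReal]
  simp only [Complex.ofReal_mul, Complex.ofReal_add, Complex.ofReal_sub, Complex.ofReal_one]
  ring

lemma one_div_cos_pi_div_two_mul_sq {n : ℕ} (hn : 2 ≤ n) :
    1 / cos (π / (2 * n)) ^ 2 = 1 + tan (π / (2 * n)) ^ 2 := by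
  have hn' : (2 : ℝ) < 2 * n := by norm_cast; omega
  have hcos : 0 < cos (π / (2 * n)) := cos_pos_of_mem_Ioo
    ⟨by linarith [pi_pos, div_pos pi_pos (by linarith : (0 : ℝ) < 2 * n)],
      div_lt_div_of_pos_left pi_pos two_pos hn'⟩
  rw [← inv_one_add_tan_sq hcos.ne', one_div, inv_inv]

theorem stmt_10 (n : ℕ) (hn : 3 ≤ n) (β : ℝ) :
    f n β 1 = (K n : ℂ) *
        (((Real.cos (β / 2) * (1 + Real.tan (π / (2 * n))) : ℝ) : ℂ) +
          Complex.I * ((Real.sin (β / 2) * (1 - Real.tan (π / (2 * n))) : ℝ) : ℂ)) ∧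
    f n β (Complex.exp (Complex.I * ((π / n : ℝ) : ℂ)))
      = Complex.exp (Complex.I * ((π / n : ℝ) : ℂ)) * (K n : ℂ) *
        (((Real.cos (β / 2) * (1 - Real.tan (π / (2 * n))) : ℝ) : ℂ) +
          Complex.I * ((Real.sin (β / 2) * (1 + Real.tan (π / (2 * n))) : ℝ) : ℂ)) ∧
    ‖f n β 1‖ ^ 2
      = K n ^ 2 * (1 / Real.cos (π / (2 * n)) ^ 2 + 2 * Real.tan (π / (2 * n)) * Real.cos β) ∧
    ‖f n β (Complex.exp (Complex.I * ((π / n : ℝ) : ℂ)))‖ ^ 2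
      = K n ^ 2 * (1 / Real.cos (π / (2 * n)) ^ 2 - 2 * Real.tan (π / (2 * n)) * Real.cos β) := by
  have hn₂ : 2 ≤ n := by omega
  refine ⟨f_one hn₂ β, f_exp_I_mul_pi_div hn₂ β, ?_, ?_⟩
  · rw [f_one hn₂, norm_mul, mul_pow, norm_sq_cos_half_add_I_sin_half, Complex.norm_real,
      norm_eq_abs, sq_abs, one_div_cos_pi_div_two_mul_sq hn₂]
  · rw [f_exp_I_mul_pi_div hn₂, norm_mul, norm_mul, Complex.norm_exp_I_mul_ofReal, one_mul,
      mul_pow, ← sub_neg_eq_add 1 (tan _), sub_eq_add_neg 1 (tan _),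
      norm_sq_cos_half_add_I_sin_half, Complex.norm_real, norm_eq_abs, sq_abs,
      one_div_cos_pi_div_two_mul_sq hn₂]
    ring
end

section
/- For every r ∈ (0,1], f_0(r) is a positive real number, and e^{−iπ/n} f_0(r e^{iπ/n}) is a positive real number. Hence the curves r ↦ f_0(r) and r ↦ f_0(r e^{iπ/n}) are straight line segments along the rays of argument 0 and π/n respectively. -/
open Real

/-! On the positive real axis both series of `f_0` have positive coefficients, so `f_0(r)` is the
positive number `hSeries n r + gSeries n r`. Put `ω = e^{iπ/n}`, so `ω^n = -1`: then
`ω^(2mn+1) = ω` and `ω^(2mn+n-1) = -ω⁻¹ = -conj ω`, hence `ω⁻¹ f_0(rω) = hSeries n r - gSeries n r`.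
This is positive because termwise `gCoeff n m < c n m` for `n ≥ 3` and the exponents of `g_n`
are the larger ones. Both series converge at `r = 1` because `A m ^ 2 * (2m + 1) ≤ 1`, so the
coefficients are `O(m^{-3/2})`. -/

lemma summable_mul_pow_of_le_one {a : ℕ → ℝ} (ha0 : ∀ m, 0 ≤ a m) (ha : Summable a)
    (k : ℕ → ℕ) {r : ℝ} (hr0 : 0 ≤ r) (hr1 : r ≤ 1) : Summable fun m => a m * r ^ k m :=
  .of_nonneg_of_le (fun m => mul_nonneg (ha0 m) (pow_nonneg hr0 _))
    (fun m => mul_le_of_le_one_right (ha0 m) (pow_le_one₀ hr0 hr1)) ha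

lemma tsum_ofReal_mul_pow_of_pow_eq (a : ℕ → ℝ) (k : ℕ → ℕ) (r : ℝ) {w u : ℂ}
    (hw : ∀ m, w ^ k m = u) :
    ∑' m, (a m : ℂ) * ((r : ℂ) * w) ^ k m = u * ↑(∑' m, a m * r ^ k m) := by
  rw [Complex.ofReal_tsum, ← tsum_mul_left]
  refine tsum_congr fun m => ?_
  rw [mul_pow, hw]
  push_cast
  ring

section RootsOfMinusOne

variable {n : ℕ}

lemma pow_two_mul_mul_add_one_of_pow_eq_neg_one {M : Type*} [Monoid M] [HasDistribNeg M]
    {ζ : M} (hζ : ζ ^ n = -1) (m : ℕ) : ζ ^ (2 * m * n + 1) = ζ := by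
  rw [pow_succ, mul_comm (2 * m), pow_mul, hζ, (even_two_mul m).neg_one_pow, one_mul]

lemma pow_two_mul_mul_add_sub_one_of_pow_eq_neg_one {K : Type*} [DivisionRing K] {ζ : K}
    (hn : 1 ≤ n) (hζ : ζ ^ n = -1) (m : ℕ) : ζ ^ (2 * m * n + n - 1) = -ζ⁻¹ := by
  have h : -ζ ^ (2 * m * n + n - 1) * ζ = 1 := by
    rw [neg_mul, ← pow_succ, show 2 * m * n + n - 1 + 1 = n * (2 * m + 1) by
      rw [Nat.sub_add_cancel (by nlinarith)]; ring, pow_mul, hζ, (odd_two_mul_add_one m).neg_one_pow,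
      neg_neg]
  rw [← eq_inv_of_mul_eq_one_left h, neg_neg]

lemma exp_I_mul_pi_div_pow (hn : n ≠ 0) :
    Complex.exp (Complex.I * ((π / n : ℝ) : ℂ)) ^ n = -1 := by
  rw [← Complex.exp_nat_mul, ← Complex.exp_pi_mul_I]
  congr 1
  push_cast
  field_simp

end RootsOfMinusOne

lemma A_zero : A 0 = 1 := by simp [A]

lemma A_pos (m : ℕ) : 0 < A m := by
  have : (0 : ℝ) < Nat.centralBinom m := by exact_mod_cast Nat.centralBinom_pos m
  unfold A; positivity

lemma A_succ (m : ℕ) : A (m + 1) = A m * (2 * m + 1) / (2 * m + 2) := by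
  have h : ((m : ℝ) + 1) * Nat.centralBinom (m + 1) = 2 * (2 * m + 1) * Nat.centralBinom m := by
    exact_mod_cast Nat.succ_mul_centralBinom_succ m
  unfold A
  rw [pow_succ]
  field_simp
  linear_combination 2 * h

lemma sq_A_mul_le_one (m : ℕ) : A m ^ 2 * (2 * m + 1) ≤ 1 := by
  induction m with
  | zero => simp [A_zero]
  | succ k ih =>
    rw [A_succ, div_pow, mul_pow, div_mul_eq_mul_div, div_le_one (by positivity)]
    push_cast
    nlinarith [sq_nonneg (A k), sq_nonneg ((2 : ℝ) * k + 1)]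

lemma summable_A_div : Summable fun m : ℕ => A m / (2 * m + 1) := by
  refine .of_nonneg_of_le (fun m => (div_pos (A_pos m) (by positivity)).le) (fun m => ?_)
    ((Real.summable_one_div_nat_add_rpow (1 / 2) (3 / 2)).mpr (by norm_num))
  set x : ℝ := m + 1 / 2 with hx
  have hx0 : 0 < x := by positivity
  have hs : √x ^ 2 = x := Real.sq_sqrt hx0.le
  have hs0 : 0 < √x := Real.sqrt_pos.mpr hx0
  have hpow : |x| ^ (3 / 2 : ℝ) = x * √x := by
    rw [abs_of_pos hx0, show (3 / 2 : ℝ) = 1 + 1 / 2 by norm_num, Real.rpow_add hx0,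
      Real.rpow_one, Real.sqrt_eq_rpow]
  have hA : A m ^ 2 * (2 * x) ≤ 1 := by
    have := sq_A_mul_le_one m; rw [hx]; linarith
  rw [hpow, show (2 * m + 1 : ℝ) = 2 * x by rw [hx]; ring, div_le_div_iff₀ (by positivity)
    (by positivity)]
  nlinarith [A_pos m, sq_nonneg (A m * √x - 1)]

/-- The coefficients of `g_n` with the factor `1 / (n - 1)` absorbed. -/
noncomputable def gCoeff (n m : ℕ) : ℝ := A m / ((n : ℝ) * (2 * m + 1) - 1)

noncomputable def hSeries (n : ℕ) (r : ℝ) : ℝ := ∑' m : ℕ, c n m * r ^ (2 * m * n + 1)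

noncomputable def gSeries (n : ℕ) (r : ℝ) : ℝ := ∑' m : ℕ, gCoeff n m * r ^ (2 * m * n + n - 1)

section Coefficients

variable {n : ℕ}

lemma c_pos (m : ℕ) : 0 < c n m := div_pos (A_pos m) (by positivity)

lemma c_le_A_div (hn : 1 ≤ n) (m : ℕ) : c n m ≤ A m / (2 * m + 1) := by
  have : (1 : ℝ) ≤ n := by exact_mod_cast hn
  exact div_le_div_of_nonneg_left (A_pos m).le (by positivity) (by nlinarith)

lemma gCoeff_nonneg (hn : 1 ≤ n) (m : ℕ) : 0 ≤ gCoeff n m := by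
  have : (1 : ℝ) ≤ n := by exact_mod_cast hn
  exact div_nonneg (A_pos m).le (by nlinarith)

lemma gCoeff_lt_c (hn : 3 ≤ n) (m : ℕ) : gCoeff n m < c n m := by
  have : (3 : ℝ) ≤ n := by exact_mod_cast hn
  exact div_lt_div_of_pos_left (A_pos m) (by positivity) (by nlinarith)

lemma d_eq_mul_gCoeff (m : ℕ) : d n m = ((n : ℝ) - 1) * gCoeff n m := by
  unfold d gCoeff; ring

lemma summable_c (hn : 1 ≤ n) : Summable (c n) :=
  .of_nonneg_of_le (fun m => (c_pos m).le) (c_le_A_div hn) summable_A_div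

lemma gSeries_nonneg (hn : 1 ≤ n) {r : ℝ} (hr : 0 ≤ r) : 0 ≤ gSeries n r :=
  tsum_nonneg fun m => mul_nonneg (gCoeff_nonneg hn m) (pow_nonneg hr _)

lemma gSeries_lt_hSeries (hn : 3 ≤ n) {r : ℝ} (hr0 : 0 < r) (hr1 : r ≤ 1) :
    gSeries n r < hSeries n r := by
  have hterm : ∀ m, gCoeff n m * r ^ (2 * m * n + n - 1) < c n m * r ^ (2 * m * n + 1) :=
    fun m => mul_lt_mul (gCoeff_lt_c hn m) (pow_le_pow_of_le_one hr0.le hr1 (by omega))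
      (pow_pos hr0 _) (c_pos m).le
  exact Summable.tsum_lt_tsum_of_nonneg
    (fun m => mul_nonneg (gCoeff_nonneg (by omega) m) (pow_nonneg hr0.le _))
    (fun m => (hterm m).le) (hterm 0)
    (summable_mul_pow_of_le_one (fun m => (c_pos m).le) (summable_c (by omega)) _ hr0.le hr1)

end Coefficients

section Evaluation

variable {n : ℕ}

lemma hh_ofReal_mul (r : ℝ) {w u : ℂ} (hw : ∀ m, w ^ (2 * m * n + 1) = u) :
    hh n (r * w) = u * hSeries n r :=
  tsum_ofReal_mul_pow_of_pow_eq _ (fun m => 2 * m * n + 1) r hw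

lemma gg_ofReal_mul (hn : n ≠ 1) (r : ℝ) {w u : ℂ} (hw : ∀ m, w ^ (2 * m * n + n - 1) = u) :
    gg n (r * w) = u * gSeries n r := by
  have hn1 : (n : ℂ) - 1 ≠ 0 := sub_ne_zero.mpr (by exact_mod_cast hn)
  have hterm : ∀ m, (d n m : ℂ) * (r * w) ^ (2 * m * n + n - 1) =
      ((n : ℂ) - 1) * ((gCoeff n m : ℂ) * (r * w) ^ (2 * m * n + n - 1)) := fun m => by
    rw [d_eq_mul_gCoeff]; push_cast; ring
  rw [gg, tsum_congr hterm, tsum_mul_left,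
    tsum_ofReal_mul_pow_of_pow_eq _ (fun m => 2 * m * n + n - 1) r hw, gSeries]
  field_simp

lemma f_zero_apply (z : ℂ) : f n 0 z = hh n z + starRingEnd ℂ (gg n z) := by
  simp [f]

lemma f_zero_ofReal (hn : n ≠ 1) (r : ℝ) : f n 0 r = ↑(hSeries n r + gSeries n r) := by
  have h := hh_ofReal_mul (n := n) r (w := 1) (fun _ => one_pow _)
  have g := gg_ofReal_mul hn r (w := 1) (fun _ => one_pow _)
  rw [mul_one, one_mul] at h g
  rw [f_zero_apply, h, g, Complex.conj_ofReal, Complex.ofReal_add]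

lemma exp_neg_mul_f_zero_ofReal_mul_exp (hn : 1 < n) (r : ℝ) :
    Complex.exp (-(Complex.I * ((π / n : ℝ) : ℂ))) *
        f n 0 (r * Complex.exp (Complex.I * ((π / n : ℝ) : ℂ))) =
      ↑(hSeries n r - gSeries n r) := by
  set ω := Complex.exp (Complex.I * ((π / n : ℝ) : ℂ))
  have hω0 : ω ≠ 0 := Complex.exp_ne_zero _
  have hω : ω ^ n = -1 := exp_I_mul_pi_div_pow (by omega)
  have hω_inv : ω⁻¹ = Complex.exp (-(Complex.I * ((π / n : ℝ) : ℂ))) := (Complex.exp_neg _).symm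
  -- `ω` lies on the unit circle, so `conj ω⁻¹ = ω`
  have hconj : starRingEnd ℂ ω⁻¹ = ω := by
    rw [hω_inv, ← Complex.exp_conj]
    simp [ω, Complex.conj_I]
  rw [f_zero_apply, hh_ofReal_mul r (pow_two_mul_mul_add_one_of_pow_eq_neg_one hω),
    gg_ofReal_mul (by omega) r (pow_two_mul_mul_add_sub_one_of_pow_eq_neg_one (by omega) hω),
    ← hω_inv, map_mul, map_neg, hconj, Complex.conj_ofReal, Complex.ofReal_sub]
  field_simp
  ring

end Evaluation

theorem stmt_12 (n : ℕ) (hn : 3 ≤ n) (r : ℝ) (hr : r ∈ Set.Ioc (0 : ℝ) 1) :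
    ((f n 0 (r : ℂ)).im = 0 ∧ 0 < (f n 0 (r : ℂ)).re) ∧
    ((Complex.exp (-(Complex.I * ((π / n : ℝ) : ℂ))) *
        f n 0 ((r : ℂ) * Complex.exp (Complex.I * ((π / n : ℝ) : ℂ)))).im = 0 ∧
      0 < (Complex.exp (-(Complex.I * ((π / n : ℝ) : ℂ))) *
        f n 0 ((r : ℂ) * Complex.exp (Complex.I * ((π / n : ℝ) : ℂ)))).re) := by
  obtain ⟨hr0, hr1⟩ := hr
  have hlt := gSeries_lt_hSeries hn hr0 hr1
  have hg := gSeries_nonneg (n := n) (by omega) hr0.le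
  rw [f_zero_ofReal (by omega), exp_neg_mul_f_zero_ofReal_mul_exp (by omega)]
  refine ⟨⟨Complex.ofReal_im _, ?_⟩, Complex.ofReal_im _, ?_⟩ <;> rw [Complex.ofReal_re] <;> linarith
end
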